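/- Incremental dominance implies the Jacobian inequality: let f : ℝ^n → ℝ^n be continuously differentiable, P ∈ ℝ^{n×n} symmetric, γ ≥ 0 and ε ≥ 0, and suppose that for every x₁, x₂ ∈ ℝ^n, 2 (x₁ − x₂)ᵀ P (f(x₁) − f(x₂)) + 2γ (x₁ − x₂)ᵀ P (x₁ − x₂) + ε ‖x₁ − x₂‖² ≤ 0. Then for every x ∈ ℝ^n the linear matrix inequality ∂f(x)ᵀ P + P ∂f(x) + 2γP + εI ⪯ 0 holds, where ∂f(x) is the Jacobian of f at x. -/

import Mathlib

open Matrix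

/-- The Jacobian matrix of `f : ℝⁿ → ℝⁿ` at `x`. -/
noncomputable def jacobianMatrix (n : ℕ) (f : (Fin n → ℝ) → (Fin n → ℝ))
    (x : Fin n → ℝ) : Matrix (Fin n) (Fin n) ℝ :=
  Matrix.of fun i j => fderiv ℝ f x (Pi.single j 1) i

/-!
Fix `x` and a direction `v`. Applying the incremental inequality to the pair `x + t v, x` and
dividing by `t > 0` gives `2 vᵀP (f(x + t v) − f(x)) + t (2γ vᵀPv + ε‖v‖²) ≤ 0`. The left-hand
side vanishes at `t = 0`, so `t = 0` is a maximum on the ray `t ≥ 0` and its one-sided derivative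
`2 vᵀP ∂f(x) v + 2γ vᵀPv + ε‖v‖²` is nonpositive. For symmetric `P` this is exactly the quadratic
form of `∂f(x)ᵀP + P∂f(x) + 2γP + εI` at `v`.
-/

open Set

theorem IsLocalMaxOn.hasDerivWithinAt_Ici_nonpos {g : ℝ → ℝ} {g' a : ℝ}
    (hmax : IsLocalMaxOn g (Ici a) a) (hg : HasDerivWithinAt g g' (Ici a) a) : g' ≤ 0 := by
  have hone : (1 : ℝ) ∈ posTangentConeAt (Ici a) a :=
    mem_posTangentConeAt_of_segment_subset <| by
      rw [segment_eq_Icc (by linarith)]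
      exact Icc_subset_Ici_self
  simpa using hmax.hasFDerivWithinAt_nonpos hg.hasFDerivWithinAt hone

theorem HasFDerivAt.apply_le_of_forall_pos_apply_sub_le
    {E F : Type*} [NormedAddCommGroup E] [NormedSpace ℝ E]
    [NormedAddCommGroup F] [NormedSpace ℝ F]
    {f : E → F} {f' : E →L[ℝ] F} {x : E} (hf : HasFDerivAt f f' x)
    (ℓ : F →L[ℝ] ℝ) (v : E) {c : ℝ}
    (h : ∀ t > 0, ℓ (f (x + t • v) - f x) ≤ t * c) : ℓ (f' v) ≤ c := by
  set g : ℝ → ℝ := fun t => ℓ (f (x + t • v) - f x) - t * c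
  have hline : HasDerivAt (fun t : ℝ => x + t • v) v 0 := by
    simpa using ((hasDerivAt_id (0 : ℝ)).smul_const v).const_add x
  have hg : HasDerivAt g (ℓ (f' v) - c) 0 := by
    have hfline : HasDerivAt (fun t : ℝ => f (x + t • v)) (f' v) 0 :=
      (by simpa using hf : HasFDerivAt f f' (x + (0 : ℝ) • v)).comp_hasDerivAt 0 hline
    exact ((ℓ.hasFDerivAt.comp_hasDerivAt 0 (hfline.sub_const (f x))).sub
      ((hasDerivAt_id 0).mul_const c)).congr_deriv (by simp)
  have hmax : IsLocalMaxOn g (Ici 0) 0 := by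
    refine Filter.eventually_of_mem self_mem_nhdsWithin fun t (ht : 0 ≤ t) => ?_
    rcases ht.eq_or_lt with rfl | ht
    · rfl
    · simpa [g] using h t ht
  linarith [hmax.hasDerivWithinAt_Ici_nonpos hg.hasDerivWithinAt]

theorem jacobianMatrix_eq_toMatrix' (n : ℕ) (f : (Fin n → ℝ) → (Fin n → ℝ)) (x : Fin n → ℝ) :
    jacobianMatrix n f x = LinearMap.toMatrix' (fderiv ℝ f x : (Fin n → ℝ) →ₗ[ℝ] Fin n → ℝ) := by
  ext i j
  simp [jacobianMatrix, LinearMap.toMatrix'_apply]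

theorem jacobianMatrix_mulVec (n : ℕ) (f : (Fin n → ℝ) → (Fin n → ℝ)) (x v : Fin n → ℝ) :
    jacobianMatrix n f x *ᵥ v = fderiv ℝ f x v := by
  rw [jacobianMatrix_eq_toMatrix', LinearMap.toMatrix'_mulVec]
  rfl

section Dominance

variable {ι : Type*} [Fintype ι]

def dominanceForm (P : Matrix ι ι ℝ) (γ ε : ℝ) (Δx Δy : ι → ℝ) : ℝ :=
  2 * (Δx ⬝ᵥ P *ᵥ Δy) + 2 * γ * (Δx ⬝ᵥ P *ᵥ Δx) + ε * (Δx ⬝ᵥ Δx)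

theorem dominanceForm_smul_left (P : Matrix ι ι ℝ) (γ ε t : ℝ) (v w : ι → ℝ) :
    dominanceForm P γ ε (t • v) w =
      t * (2 * (v ⬝ᵥ P *ᵥ w) + t * (2 * γ * (v ⬝ᵥ P *ᵥ v) + ε * (v ⬝ᵥ v))) := by
  simp only [dominanceForm, smul_dotProduct, mulVec_smul, dotProduct_smul, smul_eq_mul]
  ring

theorem dominanceForm_fderiv_nonpos {f : (ι → ℝ) → ι → ℝ} {x : ι → ℝ}
    (hf : DifferentiableAt ℝ f x) (P : Matrix ι ι ℝ) (γ ε : ℝ)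
    (hinc : ∀ y, dominanceForm P γ ε (y - x) (f y - f x) ≤ 0) (v : ι → ℝ) :
    dominanceForm P γ ε v (fderiv ℝ f x v) ≤ 0 := by
  set c := 2 * γ * (v ⬝ᵥ P *ᵥ v) + ε * (v ⬝ᵥ v)
  let ℓ : (ι → ℝ) →L[ℝ] ℝ := LinearMap.toContinuousLinearMap (2 • dotProductBilin ℝ ℝ (v ᵥ* P))
  have hℓ (w : ι → ℝ) : ℓ w = 2 * (v ⬝ᵥ P *ᵥ w) := by
    simp [ℓ, dotProduct_mulVec]
  have hray : ∀ t > 0, ℓ (f (x + t • v) - f x) ≤ t * -c := by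
    intro t ht
    have h := hinc (x + t • v)
    rw [add_sub_cancel_left, dominanceForm_smul_left] at h
    rw [hℓ]
    linarith [nonpos_of_mul_nonpos_right h ht]
  have hderiv := hf.hasFDerivAt.apply_le_of_forall_pos_apply_sub_le ℓ v hray
  rw [hℓ] at hderiv
  simp only [dominanceForm, c] at hderiv ⊢
  linarith

variable [DecidableEq ι]

def dominanceMatrix (P : Matrix ι ι ℝ) (γ ε : ℝ) (J : Matrix ι ι ℝ) : Matrix ι ι ℝ :=
  Jᵀ * P + P * J + (2 * γ) • P + ε • 1

theorem dotProduct_dominanceMatrix_mulVec {P : Matrix ι ι ℝ} (hP : P.IsSymm) (γ ε : ℝ)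
    (J : Matrix ι ι ℝ) (v : ι → ℝ) :
    v ⬝ᵥ dominanceMatrix P γ ε J *ᵥ v = dominanceForm P γ ε v (J *ᵥ v) := by
  have hJP : v ⬝ᵥ Jᵀ *ᵥ P *ᵥ v = v ⬝ᵥ P *ᵥ J *ᵥ v := by
    rw [dotProduct_transpose_mulVec, dotProduct_comm, ← dotProduct_transpose_mulVec P, hP.eq]
  simp only [dominanceMatrix, dominanceForm, add_mulVec, dotProduct_add, ← mulVec_mulVec, hJP,
    smul_mulVec, dotProduct_smul, one_mulVec, smul_eq_mul]
  ring

theorem isSymm_dominanceMatrix {P : Matrix ι ι ℝ} (hP : P.IsSymm) (γ ε : ℝ)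
    (J : Matrix ι ι ℝ) : (dominanceMatrix P γ ε J).IsSymm := by
  have hJP : (Jᵀ * P + P * J).IsSymm := by
    simpa only [transpose_mul, hP.eq] using isSymm_transpose_add_self (P * J)
  exact (hJP.add (hP.smul _)).add (isSymm_one.smul _)

end Dominance

theorem incremental_dominance_implies_jacobian_LMI_general
    (n : ℕ) (f : (Fin n → ℝ) → (Fin n → ℝ)) (hf : ContDiff ℝ 1 f)
    (P : Matrix (Fin n) (Fin n) ℝ) (hPsymm : P.IsSymm)
    (γ ε : ℝ)
    (hinc : ∀ x₁ x₂ : Fin n → ℝ,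
      2 * ((x₁ - x₂) ⬝ᵥ P.mulVec (f x₁ - f x₂)) +
        2 * γ * ((x₁ - x₂) ⬝ᵥ P.mulVec (x₁ - x₂)) +
        ε * ((x₁ - x₂) ⬝ᵥ (x₁ - x₂)) ≤ 0) :
    ∀ x : Fin n → ℝ,
      (-((jacobianMatrix n f x)ᵀ * P + P * jacobianMatrix n f x +
          (2 * γ) • P + ε • 1)).PosSemidef := by
  intro x
  change (-dominanceMatrix P γ ε (jacobianMatrix n f x)).PosSemidef
  refine PosSemidef.of_dotProduct_mulVec_nonneg ?_ fun v => ?_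
  · exact isHermitian_iff_isSymm.mpr (isSymm_dominanceMatrix hPsymm γ ε _).neg
  · rw [star_trivial, neg_mulVec, dotProduct_neg, dotProduct_dominanceMatrix_mulVec hPsymm,
      jacobianMatrix_mulVec, neg_nonneg]
    exact dominanceForm_fderiv_nonpos (hf.differentiable one_ne_zero x) P γ ε (hinc · x) v

/-- Incremental dominance implies the Jacobian inequality: if
`2 Δxᵀ P (f(x₁) − f(x₂)) + 2γ Δxᵀ P Δx + ε‖Δx‖² ≤ 0` for every `x₁, x₂` (with
`Δx = x₁ − x₂`), then `∂f(x)ᵀP + P∂f(x) + 2γP + εI ⪯ 0` at every point `x`. -/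
theorem incremental_dominance_implies_jacobian_LMI
    (n : ℕ) (f : (Fin n → ℝ) → (Fin n → ℝ)) (hf : ContDiff ℝ 1 f)
    (P : Matrix (Fin n) (Fin n) ℝ) (hPsymm : P.IsSymm)
    (γ ε : ℝ) (hγ : 0 ≤ γ) (hε : 0 ≤ ε)
    (hinc : ∀ x₁ x₂ : Fin n → ℝ,
      2 * ((x₁ - x₂) ⬝ᵥ P.mulVec (f x₁ - f x₂)) +
        2 * γ * ((x₁ - x₂) ⬝ᵥ P.mulVec (x₁ - x₂)) +
        ε * ((x₁ - x₂) ⬝ᵥ (x₁ - x₂)) ≤ 0) :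
    ∀ x : Fin n → ℝ,
      (-((jacobianMatrix n f x)ᵀ * P + P * jacobianMatrix n f x +
          (2 * γ) • P + ε • 1)).PosSemidef :=
  incremental_dominance_implies_jacobian_LMI_general n f hf P hPsymm γ ε hinc
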